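/- arXiv:1506.03035 — 2 statements merged into one kernel-verified Lean document; each statement's English description precedes it below -/
import Mathlib

section
/- Let E and F be Banach spaces over ℂ, let ω : E → F be a bounded linear map, and let C > 0. Suppose (π_γ)_{γ∈Γ} is a net of bounded linear maps E* → F* with ‖π_γ‖ ≤ C for all γ, such that for every f ∈ F* and every y ∈ F the net of scalars (π_γ(ω*(f)))(y) converges to f(y) (i.e. π_γ ∘ ω* converges to the identity of F* in the weak*-operator topology). Then there exists a bounded linear map π : E* → F* with ‖π‖ ≤ C such that π ∘ ω* = id on F*. -/
/-!
Pass to an ultrafilter finer than `atTop`. Each scalar net `γ ↦ π γ g y` is bounded by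
`C ‖g‖ ‖y‖`, so by compactness of closed discs it converges along the ultrafilter; the limits are
bilinear in `(g, y)` with the same bound, hence form some `π₀` with `‖π₀‖ ≤ C`. On `g = ω* f` the
limit along the finer filter must be the given limit `f y`.
-/

open NormedSpace Filter

/-- The adjoint (dual map) of a bounded linear map between Banach spaces over ℂ:
`dualTranspose ω = (f ↦ f ∘ ω) : F* → E*`. -/
noncomputable def dualTranspose {E F : Type*} [NormedAddCommGroup E] [NormedSpace ℂ E]
    [NormedAddCommGroup F] [NormedSpace ℂ F] (ω : E →L[ℂ] F) :
    StrongDual ℂ F →L[ℂ] StrongDual ℂ E :=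
  (ContinuousLinearMap.compL ℂ E F ℂ).flip ω

open Topology Metric

theorem Ultrafilter.exists_tendsto_of_norm_le {Γ Z : Type*} [NormedAddCommGroup Z] [ProperSpace Z]
    (u : Ultrafilter Γ) {f : Γ → Z} {r : ℝ} (hf : ∀ γ, ‖f γ‖ ≤ r) :
    ∃ z, Tendsto f u (𝓝 z) := by
  have hmem : ↑(u.map f) ≤ 𝓟 (closedBall (0 : Z) r) :=
    le_principal_iff.mpr <| mem_map.mpr <| univ_mem' fun γ => mem_closedBall_zero_iff.mpr (hf γ)
  obtain ⟨z, -, hz⟩ := (isCompact_closedBall (0 : Z) r).ultrafilter_le_nhds _ hmem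
  exact ⟨z, hz⟩

section

variable {𝕜 X Y Z Γ : Type*} [NontriviallyNormedField 𝕜]
  [NormedAddCommGroup X] [NormedSpace 𝕜 X] [NormedAddCommGroup Y] [NormedSpace 𝕜 Y]
  [NormedAddCommGroup Z] [NormedSpace 𝕜 Z] [ProperSpace Z]

theorem ContinuousLinearMap.exists_tendsto_apply_apply_of_norm_le (u : Ultrafilter Γ)
    {T : Γ → X →L[𝕜] Y →L[𝕜] Z} {C : ℝ} (hT : ∀ γ, ‖T γ‖ ≤ C) :
    ∃ T₀ : X →L[𝕜] Y →L[𝕜] Z, ‖T₀‖ ≤ C ∧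
      ∀ x y, Tendsto (fun γ => T γ x y) u (𝓝 (T₀ x y)) := by
  have hTxy : ∀ x y γ, ‖T γ x y‖ ≤ C * ‖x‖ * ‖y‖ := fun x y γ =>
    (T γ).le_of_opNorm₂_le_of_le (hT γ) le_rfl le_rfl
  choose L hL using fun x y => u.exists_tendsto_of_norm_le (hTxy x y)
  have hLxy : ∀ x y, ‖L x y‖ ≤ C * ‖x‖ * ‖y‖ := fun x y =>
    le_of_tendsto' (hL x y).norm (hTxy x y)
  let B : X →ₗ[𝕜] Y →ₗ[𝕜] Z := LinearMap.mk₂ 𝕜 L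
    (fun x x' y => tendsto_nhds_unique (by simpa using hL (x + x') y) ((hL x y).add (hL x' y)))
    (fun c x y => tendsto_nhds_unique (by simpa using hL (c • x) y) ((hL x y).const_smul c))
    (fun x y y' => tendsto_nhds_unique (by simpa using hL x (y + y')) ((hL x y).add (hL x y')))
    (fun c x y => tendsto_nhds_unique (by simpa using hL x (c • y)) ((hL x y).const_smul c))
  obtain ⟨γ, -⟩ := u.nonempty_of_mem univ_mem
  have hC : 0 ≤ C := (norm_nonneg (T γ)).trans (hT γ)
  exact ⟨B.mkContinuous₂ C hLxy, B.mkContinuous₂_norm_le hC hLxy, hL⟩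

end

theorem stmt2_general {E F : Type*} [NormedAddCommGroup E] [NormedSpace ℂ E]
    [NormedAddCommGroup F] [NormedSpace ℂ F]
    (ω : E →L[ℂ] F) (C : ℝ)
    {Γ : Type*} [Nonempty Γ] [Preorder Γ] [IsDirected Γ (· ≤ ·)]
    (π : Γ → (StrongDual ℂ E →L[ℂ] StrongDual ℂ F))
    (hbound : ∀ γ : Γ, ‖π γ‖ ≤ C)
    (hconv : ∀ (f : StrongDual ℂ F) (y : F),
      Tendsto (fun γ : Γ => π γ (dualTranspose ω f) y) atTop (nhds (f y))) :
    ∃ π₀ : StrongDual ℂ E →L[ℂ] StrongDual ℂ F, ‖π₀‖ ≤ C ∧ ∀ f : StrongDual ℂ F, π₀ (dualTranspose ω f) = f := by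
  let u : Ultrafilter Γ := .of atTop
  obtain ⟨π₀, hπ₀C, hπ₀⟩ := ContinuousLinearMap.exists_tendsto_apply_apply_of_norm_le u hbound
  refine ⟨π₀, hπ₀C, fun f => ContinuousLinearMap.ext fun y => ?_⟩
  exact tendsto_nhds_unique (hπ₀ _ y) ((hconv f y).mono_left (Ultrafilter.of_le atTop))

/-- If a net `(π_γ)` of bounded linear maps `E* → F*`, uniformly bounded by `C`, satisfies
`π_γ ∘ ω* → id_{F*}` in the weak*-operator topology, then `ω*` has a bounded left inverse
`π` with `‖π‖ ≤ C`. -/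
theorem stmt2 {E F : Type*} [NormedAddCommGroup E] [NormedSpace ℂ E] [CompleteSpace E]
    [NormedAddCommGroup F] [NormedSpace ℂ F] [CompleteSpace F]
    (ω : E →L[ℂ] F) (C : ℝ) (hC : 0 < C)
    {Γ : Type*} [Nonempty Γ] [Preorder Γ] [IsDirected Γ (· ≤ ·)]
    (π : Γ → (StrongDual ℂ E →L[ℂ] StrongDual ℂ F))
    (hbound : ∀ γ : Γ, ‖π γ‖ ≤ C)
    (hconv : ∀ (f : StrongDual ℂ F) (y : F),
      Tendsto (fun γ : Γ => π γ (dualTranspose ω f) y) atTop (nhds (f y))) :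
    ∃ π₀ : StrongDual ℂ E →L[ℂ] StrongDual ℂ F, ‖π₀‖ ≤ C ∧ ∀ f : StrongDual ℂ F, π₀ (dualTranspose ω f) = f :=
  stmt2_general ω C π hbound hconv
end

section
/- Let E and F be Banach spaces over ℂ and let ω : E → F be a bounded linear map. Then the following are equivalent: (a) there exists a bounded linear map π : E* → F* with π ∘ ω* = id on F*; (b) there exists a bounded linear map ρ : F → E** with ω** ∘ ρ = ι_F, where ι_F : F → F** is the canonical embedding; (c) there exist C > 0 and a net (π_γ) of bounded linear maps E* → F* with ‖π_γ‖ ≤ C for all γ such that for every f ∈ F* and every y ∈ F, (π_γ(ω*(f)))(y) converges to f(y). -/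
/-!
Conditions (a) and (b) are the two curryings of one bounded bilinear form on `E* × F`, so each
follows from the other by flipping arguments. A left inverse as in (a) is a constant net as in (c).
Conversely, by Banach–Alaoglu a uniformly bounded net `π_γ` of bilinear forms converges pointwise
along any ultrafilter finer than the net's filter; the limit is a bounded operator `E* → F*`, and
it inverts `ω*` on the left since `π_γ (ω* f) y → f y`.
-/

open NormedSpace Filter Metric Topology

@[simp]
lemma dualTranspose_apply {E F : Type*} [NormedAddCommGroup E] [NormedSpace ℂ E]
    [NormedAddCommGroup F] [NormedSpace ℂ F] (ω : E →L[ℂ] F) (f : StrongDual ℂ F) (x : E) :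
    dualTranspose ω f x = f (ω x) := rfl

namespace ContinuousLinearMap

variable {𝕜 E F G Γ : Type*} [NontriviallyNormedField 𝕜]
  [NormedAddCommGroup E] [NormedSpace 𝕜 E] [NormedAddCommGroup F] [NormedSpace 𝕜 F]
  [NormedAddCommGroup G] [NormedSpace 𝕜 G] [ProperSpace G]

theorem exists_tendsto_ultrafilter_of_norm_le (U : Ultrafilter Γ) (g : Γ → E →L[𝕜] G) {C : ℝ}
    (hg : ∀ γ, ‖g γ‖ ≤ C) :
    ∃ L : E →L[𝕜] G, ‖L‖ ≤ C ∧ ∀ x, Tendsto (fun γ => g γ x) U (𝓝 (L x)) := by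
  obtain ⟨_, ⟨L, hL, rfl⟩, hlim⟩ :=
    (isCompact_image_coe_closedBall (0 : E →L[𝕜] G) C).ultrafilter_le_nhds'
      (U.map fun γ => ⇑(g γ))
      (Ultrafilter.mem_map.2 (univ_mem' fun γ => ⟨g γ, mem_closedBall_zero_iff.2 (hg γ), rfl⟩))
  exact ⟨L, mem_closedBall_zero_iff.1 hL, tendsto_pi_nhds.1 hlim⟩

theorem exists_tendsto_ultrafilter_of_norm_le₂ (U : Ultrafilter Γ) (B : Γ → E →L[𝕜] F →L[𝕜] G)
    {C : ℝ} (hB : ∀ γ, ‖B γ‖ ≤ C) :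
    ∃ B₀ : E →L[𝕜] F →L[𝕜] G, ∀ x y, Tendsto (fun γ => B γ x y) U (𝓝 (B₀ x y)) := by
  choose L hL_norm hL using fun x =>
    exists_tendsto_ultrafilter_of_norm_le U (fun γ => B γ x) fun γ => (B γ).le_of_opNorm_le (hB γ) x
  let B₀ : E →ₗ[𝕜] F →L[𝕜] G :=
    { toFun := L
      map_add' := fun x x' => ext fun y =>
        tendsto_nhds_unique (hL (x + x') y) (by simpa using (hL x y).add (hL x' y))
      map_smul' := fun c x => ext fun y =>
        tendsto_nhds_unique (hL (c • x) y) (by simpa using (hL x y).const_smul c) }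
  exact ⟨B₀.mkContinuous C hL_norm, hL⟩

end ContinuousLinearMap

theorem stmt4_general {E F : Type*} [NormedAddCommGroup E] [NormedSpace ℂ E]
    [NormedAddCommGroup F] [NormedSpace ℂ F]
    (ω : E →L[ℂ] F) :
    List.TFAE [
      (∃ π : StrongDual ℂ E →L[ℂ] StrongDual ℂ F, ∀ f : StrongDual ℂ F, π (dualTranspose ω f) = f),
      (∃ ρ : F →L[ℂ] StrongDual ℂ (StrongDual ℂ E),
        ∀ y : F, dualTranspose (dualTranspose ω) (ρ y) = inclusionInDoubleDual ℂ F y),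
      (∃ C : ℝ, 0 < C ∧ ∃ (Γ : Type) (_ : Nonempty Γ) (p : Preorder Γ),
        IsDirected Γ (fun a b => p.le a b) ∧
        ∃ π : Γ → (StrongDual ℂ E →L[ℂ] StrongDual ℂ F),
          (∀ γ : Γ, ‖π γ‖ ≤ C) ∧
          ∀ (f : StrongDual ℂ F) (y : F),
            Tendsto (fun γ : Γ => π γ (dualTranspose ω f) y) (@Filter.atTop Γ p)
              (nhds (f y)))] := by
  tfae_have 1 → 2 := fun ⟨π, hπ⟩ => ⟨π.flip, fun y => by ext f; simp [hπ]⟩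
  tfae_have 2 → 1 := fun ⟨ρ, hρ⟩ =>
    ⟨ρ.flip, fun f => by ext y; simpa using DFunLike.congr_fun (hρ y) f⟩
  tfae_have 1 → 3 := by
    rintro ⟨π, hπ⟩
    refine ⟨‖π‖ + 1, by positivity, Unit, inferInstance, inferInstance, inferInstance,
      fun _ => π, fun _ => by linarith, fun f y => ?_⟩
    simp [hπ]
  tfae_have 3 → 1 := by
    rintro ⟨C, -, Γ, hne, p, hdir, π, hπ_norm, hπ_lim⟩
    have : (@atTop Γ p).NeBot := @atTop_neBot_iff Γ p |>.2 ⟨hne, hdir⟩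
    obtain ⟨π₀, hπ₀⟩ :=
      ContinuousLinearMap.exists_tendsto_ultrafilter_of_norm_le₂ (.of (@atTop Γ p)) π hπ_norm
    exact ⟨π₀, fun f => ContinuousLinearMap.ext fun y =>
      tendsto_nhds_unique (hπ₀ _ y) ((hπ_lim f y).mono_left (Ultrafilter.of_le _))⟩
  tfae_finish

/-- Banach-space skeleton of Theorem 2.1: for a bounded linear map `ω : E → F` the
following are equivalent:
(a) the adjoint `ω* : F* → E*` has a bounded left inverse;
(b) there is a bounded linear `ρ : F → E**` with `ω** ∘ ρ = ι_F`;
(c) there are `C > 0` and a uniformly `C`-bounded net of operators `π_γ : E* → F*` with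
`π_γ ∘ ω* → id_{F*}` in the weak*-operator topology. -/
theorem stmt4 {E F : Type*} [NormedAddCommGroup E] [NormedSpace ℂ E] [CompleteSpace E]
    [NormedAddCommGroup F] [NormedSpace ℂ F] [CompleteSpace F]
    (ω : E →L[ℂ] F) :
    List.TFAE [
      (∃ π : StrongDual ℂ E →L[ℂ] StrongDual ℂ F, ∀ f : StrongDual ℂ F, π (dualTranspose ω f) = f),
      (∃ ρ : F →L[ℂ] StrongDual ℂ (StrongDual ℂ E),
        ∀ y : F, dualTranspose (dualTranspose ω) (ρ y) = inclusionInDoubleDual ℂ F y),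
      (∃ C : ℝ, 0 < C ∧ ∃ (Γ : Type) (_ : Nonempty Γ) (p : Preorder Γ),
        IsDirected Γ (fun a b => p.le a b) ∧
        ∃ π : Γ → (StrongDual ℂ E →L[ℂ] StrongDual ℂ F),
          (∀ γ : Γ, ‖π γ‖ ≤ C) ∧
          ∀ (f : StrongDual ℂ F) (y : F),
            Tendsto (fun γ : Γ => π γ (dualTranspose ω f) y) (@Filter.atTop Γ p)
              (nhds (f y)))] :=
  stmt4_general ω
end
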